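/- Suppose σ̂_A > σ̂_B and σ̃_A < σ̃_B. Let α_min := min{Φ((Δμ − Δβ)/Δσ̂), Φ(Δμ/Δσ̃)} and α_max := max{Φ((Δμ − Δβ)/Δσ̂), Φ(Δμ/Δσ̃)}. If α ∈ (0, α_min) ∪ (α_max, 1), then either x^obl < α < x^opt or x^opt < α < x^obl; that is, the demographic-parity rate α lies strictly between the group-oblivious rate and the Bayesian-optimal rate of group A. -/
import Mathlib


noncomputable def gpdf (t : ℝ) : ℝ := Real.exp (-t ^ 2 / 2) / Real.sqrt (2 * Real.pi)

noncomputable def gcdf (x : ℝ) : ℝ := ∫ t in Set.Iic x, gpdf t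

noncomputable def gquant : ℝ → ℝ := Function.invFun gcdf

noncomputable def sHat (η σ : ℝ) : ℝ := Real.sqrt (η ^ 2 + σ ^ 2)

noncomputable def sTil (η σ : ℝ) : ℝ := η ^ 2 / sHat η σ

def Dset (pA α : ℝ) : Set ℝ :=
  {x | x ∈ Set.Ioo (0:ℝ) 1 ∧ (α - pA * x) / (1 - pA) ∈ Set.Ioo (0:ℝ) 1}

noncomputable def Qfun (pA α μA μB sA sB x : ℝ) : ℝ :=
  (1 / α) * (pA * (μA * x + sA * gpdf (gquant (1 - x)))
    + (1 - pA) * (μB * ((α - pA * x) / (1 - pA))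
      + sB * gpdf (gquant (1 - (α - pA * x) / (1 - pA)))))

noncomputable def clampTo (lo hi x : ℝ) : ℝ := min hi (max lo x)


lemma gpdf_pos (t : ℝ) : 0 < gpdf t :=
  div_pos (Real.exp_pos _) (Real.sqrt_pos.2 (by positivity))

lemma integrable_gpdf : MeasureTheory.Integrable gpdf := by
  have h : gpdf = fun t => Real.exp (-(1/2) * t ^ 2) / Real.sqrt (2 * Real.pi) := by
    funext t; unfold gpdf; ring_nf
  rw [h]
  exact (integrable_exp_neg_mul_sq (by norm_num)).div_const _

lemma gpdf_total : ∫ t, gpdf t = 1 := by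
  have h : ∀ t : ℝ, gpdf t = Real.exp (-(1/2) * t ^ 2) / Real.sqrt (2 * Real.pi) := by
    intro t; unfold gpdf; ring_nf
  simp_rw [h, MeasureTheory.integral_div, integral_gaussian]
  rw [div_eq_one_iff_eq (by positivity)]
  rw [show (Real.pi / (1/2)) = 2 * Real.pi by ring]

lemma gcdf_strictMono : StrictMono gcdf := by
  intro x y hxy
  have key : gcdf y - gcdf x = ∫ t in x..y, gpdf t :=
    intervalIntegral.integral_Iic_sub_Iic integrable_gpdf.integrableOn integrable_gpdf.integrableOn
  have hpos : 0 < ∫ t in x..y, gpdf t :=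
    intervalIntegral.intervalIntegral_pos_of_pos integrable_gpdf.intervalIntegrable gpdf_pos hxy
  linarith

lemma gcdf_neg (x : ℝ) : gcdf (-x) = 1 - gcdf x := by
  have heven : ∀ t : ℝ, gpdf (-t) = gpdf t := by intro t; unfold gpdf; ring_nf
  have h1 : gcdf (-x) = ∫ t in Set.Ioi x, gpdf t := by
    unfold gcdf
    rw [show (∫ t in Set.Iic (-x), gpdf t) = ∫ t in Set.Iic (-x), gpdf (-t) by
      simp_rw [heven], integral_comp_neg_Iic, neg_neg]
  have h2 : gcdf x + (∫ t in Set.Ioi x, gpdf t) = 1 := by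
    unfold gcdf
    rw [intervalIntegral.integral_Iic_add_Ioi integrable_gpdf.integrableOn
      integrable_gpdf.integrableOn, gpdf_total]
  linarith

lemma key (p a mA mB sA sB θ : ℝ) (hp0 : 0 < p) (hp1 : p < 1)
    (hsB : 0 < sB) (hsAB : sB < sA)
    (hθ : p * (1 - gcdf ((θ - mA) / sA)) + (1 - p) * (1 - gcdf ((θ - mB) / sB)) = a) :
    (a < gcdf ((mA - mB) / (sA - sB)) → a < 1 - gcdf ((θ - mA) / sA)) ∧
    (gcdf ((mA - mB) / (sA - sB)) < a → 1 - gcdf ((θ - mA) / sA) < a) := by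
  have hsA : 0 < sA := hsB.trans hsAB
  have hd : 0 < sA - sB := sub_pos.2 hsAB
  set c : ℝ := (mA - mB) / (sA - sB) with hc
  set θs : ℝ := (sA * mB - sB * mA) / (sA - sB) with hθs
  have huA : (θs - mA) / sA = -c := by
    rw [hθs, hc]; field_simp; ring
  have huB : (θs - mB) / sB = -c := by
    rw [hθs, hc]; field_simp; ring
  have hsym : gcdf (-c) = 1 - gcdf c := gcdf_neg c
  -- strict comparison of the quantile arguments when θ > θs
  have harg_gt : θs < θ → gcdf ((θ - mA) / sA) < gcdf ((θ - mB) / sB) := by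
    intro h
    apply gcdf_strictMono
    rw [div_lt_div_iff₀ hsA hsB]
    have h' : sA * mB - sB * mA < θ * (sA - sB) := (div_lt_iff₀ hd).1 h
    nlinarith
  have harg_lt : θ < θs → gcdf ((θ - mB) / sB) < gcdf ((θ - mA) / sA) := by
    intro h
    apply gcdf_strictMono
    rw [div_lt_div_iff₀ hsB hsA]
    have h' : θ * (sA - sB) < sA * mB - sB * mA := (lt_div_iff₀ hd).1 h
    nlinarith
  constructor
  · intro ha
    have hgt : θs < θ := by
      by_contra hle
      push_neg at hle
      have h1 : gcdf ((θ - mA) / sA) ≤ gcdf (-c) := by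
        rw [← huA]; exact gcdf_strictMono.monotone (by gcongr)
      have h2 : gcdf ((θ - mB) / sB) ≤ gcdf (-c) := by
        rw [← huB]; exact gcdf_strictMono.monotone (by gcongr)
      nlinarith
    have := harg_gt hgt
    nlinarith
  · intro ha
    have hlt : θ < θs := by
      by_contra hle
      push_neg at hle
      have h1 : gcdf (-c) ≤ gcdf ((θ - mA) / sA) := by
        rw [← huA]; exact gcdf_strictMono.monotone (by gcongr)
      have h2 : gcdf (-c) ≤ gcdf ((θ - mB) / sB) := by
        rw [← huB]; exact gcdf_strictMono.monotone (by gcongr)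
      nlinarith
    have := harg_lt hlt
    nlinarith

lemma sHat_pos (η σ : ℝ) (hη : 0 < η) : 0 < sHat η σ := by
  unfold sHat; positivity

lemma sTil_pos (η σ : ℝ) (hη : 0 < η) : 0 < sTil η σ := by
  unfold sTil; exact div_pos (by positivity) (sHat_pos η σ hη)

/-- outside `[α_min, α_max]`, the demographic-parity rate `α` lies
strictly between the group-oblivious rate `x^obl` and the Bayesian-optimal rate
`x^opt` of group `A`. -/
theorem stmt2 (pA α μA μB ηA ηB σA σB βA βB θ θt xobl xopt : ℝ)
    (hpA : pA ∈ Set.Ioo (0:ℝ) 1) (hα01 : α ∈ Set.Ioo (0:ℝ) 1)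
    (hηA : 0 < ηA) (hηB : 0 < ηB) (hσA : 0 < σA) (hσB : 0 < σB)
    (hshat : sHat ηB σB < sHat ηA σA) (hstil : sTil ηA σA < sTil ηB σB)
    (hθ : pA * (1 - gcdf ((θ - μA + βA) / sHat ηA σA))
        + (1 - pA) * (1 - gcdf ((θ - μB + βB) / sHat ηB σB)) = α)
    (hθt : pA * (1 - gcdf ((θt - μA) / sTil ηA σA))
        + (1 - pA) * (1 - gcdf ((θt - μB) / sTil ηB σB)) = α)
    (hxobl : xobl = 1 - gcdf ((θ - μA + βA) / sHat ηA σA))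
    (hxopt : xopt = 1 - gcdf ((θt - μA) / sTil ηA σA))
    (hα : α ∈ Set.Ioo (0:ℝ)
            (min (gcdf (((μA - μB) - (βA - βB)) / (sHat ηA σA - sHat ηB σB)))
                 (gcdf ((μA - μB) / (sTil ηA σA - sTil ηB σB))))
          ∪ Set.Ioo
            (max (gcdf (((μA - μB) - (βA - βB)) / (sHat ηA σA - sHat ηB σB)))
                 (gcdf ((μA - μB) / (sTil ηA σA - sTil ηB σB)))) 1) :
    (xobl < α ∧ α < xopt) ∨ (xopt < α ∧ α < xobl) := by
  obtain ⟨hp0, hp1⟩ := hpA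
  -- oblivious: apply key with mA = μA - βA, mB = μB - βB
  have hθ' : pA * (1 - gcdf ((θ - (μA - βA)) / sHat ηA σA))
      + (1 - pA) * (1 - gcdf ((θ - (μB - βB)) / sHat ηB σB)) = α := by
    rw [show θ - (μA - βA) = θ - μA + βA by ring,
        show θ - (μB - βB) = θ - μB + βB by ring]
    exact hθ
  obtain ⟨k1, k2⟩ := key pA α (μA - βA) (μB - βB) (sHat ηA σA) (sHat ηB σB) θ hp0 hp1
    (sHat_pos ηB σB hηB) hshat hθ'
  rw [show (μA - βA) - (μB - βB) = (μA - μB) - (βA - βB) by ring] at k1 k2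
  rw [show θ - (μA - βA) = θ - μA + βA by ring] at k1 k2
  rw [← hxobl] at k1 k2
  -- Bayes-optimal: apply key with groups swapped
  have hθt' : (1 - pA) * (1 - gcdf ((θt - μB) / sTil ηB σB))
      + (1 - (1 - pA)) * (1 - gcdf ((θt - μA) / sTil ηA σA)) = α := by
    linear_combination hθt
  obtain ⟨k3, k4⟩ := key (1 - pA) α μB μA (sTil ηB σB) (sTil ηA σA) θt
    (by linarith) (by linarith) (sTil_pos ηA σA hηA) hstil hθt'
  rw [show μB - μA = -(μA - μB) by ring,
    show sTil ηB σB - sTil ηA σA = -(sTil ηA σA - sTil ηB σB) by ring,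
    neg_div_neg_eq] at k3 k4
  -- convert statements about x_B^opt into statements about xopt
  set XB : ℝ := 1 - gcdf ((θt - μB) / sTil ηB σB) with hXB
  have hlin : pA * xopt + (1 - pA) * XB = α := by rw [hxopt]; exact hθt
  rcases hα with ⟨-, hlt⟩ | ⟨hgt, -⟩
  · rw [lt_min_iff] at hlt
    have h1 : α < xobl := k1 hlt.1
    have h2 : α < XB := k3 hlt.2
    have h3 : xopt < α := by nlinarith
    exact Or.inr ⟨h3, h1⟩
  · rw [max_lt_iff] at hgt
    have h1 : xobl < α := k2 hgt.1
    have h2 : XB < α := k4 hgt.2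
    have h3 : α < xopt := by nlinarith
    exact Or.inl ⟨h1, h3⟩
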